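/- The natural order 0 < 1 < ... < m−1 on Z_m (integers modulo m) is a respectful ordering: for nonzero x, y ∈ Z_m with (x) ⊋ (y), there exists a unit α with αx < uy for all units u (where comparison uses the natural representatives). -/

import Mathlib

/-!
Write `x = a * d` and `y = b * e` with `a, b` units and `d, e` divisors of `m`, so that
`(x) = (d)` and `(y) = (e)`. Every nonzero element of `(e)` has a representative divisible by `e`,
hence at least `e`; applied to `e ∈ (d)` this gives `d < e`. So `α = a⁻¹` works: `αx = d < e ≤ uy`.
-/

namespace ZMod

variable {m d : ℕ}

theorem dvd_val_of_mem_span_natCast (hd : d ∣ m) {z : ZMod m}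
    (hz : z ∈ Ideal.span {(d : ZMod m)}) : d ∣ z.val := by
  obtain ⟨c, rfl⟩ := Ideal.mem_span_singleton'.mp hz
  rw [val_mul, val_natCast, Nat.dvd_mod_iff hd]
  exact Dvd.dvd.mul_left ((Nat.dvd_mod_iff hd).mpr dvd_rfl) _

theorem le_val_of_mem_span_natCast (hd : d ∣ m) {z : ZMod m}
    (hz : z ∈ Ideal.span {(d : ZMod m)}) (hz0 : z ≠ 0) : d ≤ z.val :=
  Nat.le_of_dvd (Nat.pos_of_ne_zero ((val_ne_zero z).mpr hz0)) (dvd_val_of_mem_span_natCast hd hz)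

theorem val_natCast_of_dvd [NeZero m] (hd : d ∣ m) (h0 : (d : ZMod m) ≠ 0) : (d : ZMod m).val = d := by
  refine val_natCast_of_lt ((Nat.le_of_dvd (Nat.pos_of_neZero m) hd).lt_of_ne ?_)
  rintro rfl
  exact h0 (natCast_self d)

end ZMod

open ZMod in
theorem natural_order_on_zmod_respectful (m : ℕ) [NeZero m] (x y : ZMod m)
    (hx : x ≠ 0) (hy : y ≠ 0)
    (h : Ideal.span {y} < Ideal.span {x}) :
    ∃ α : (ZMod m)ˣ, ∀ u : (ZMod m)ˣ,
      ((α : ZMod m) * x).val < ((u : ZMod m) * y).val := by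
  obtain ⟨d, hdm, a, ha, rfl⟩ := eq_unit_mul_divisor x
  obtain ⟨e, hem, b, hb, rfl⟩ := eq_unit_mul_divisor y
  rw [Ideal.span_singleton_mul_left_unit ha, Ideal.span_singleton_mul_left_unit hb] at h
  have hd0 : (d : ZMod m) ≠ 0 := right_ne_zero_of_mul hx
  have he0 : (e : ZMod m) ≠ 0 := right_ne_zero_of_mul hy
  have hde : d < e := by
    have hle := le_val_of_mem_span_natCast hdm (h.le (Ideal.mem_span_singleton_self _)) he0
    rw [val_natCast_of_dvd hem he0] at hle
    exact hle.lt_of_ne (by rintro rfl; exact h.ne rfl)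
  refine ⟨ha.unit⁻¹, fun u => ?_⟩
  rw [← mul_assoc, ha.val_inv_mul, one_mul, val_natCast_of_dvd hdm hd0]
  have huy_mem : (u : ZMod m) * (b * e) ∈ Ideal.span {(e : ZMod m)} :=
    Ideal.mul_mem_left _ _ (Ideal.mul_mem_left _ _ (Ideal.mem_span_singleton_self _))
  have huy0 : (u : ZMod m) * (b * e) ≠ 0 := fun h0 => hy ((Units.mul_right_eq_zero u).mp h0)
  exact hde.trans_le (le_val_of_mem_span_natCast hem huy_mem huy0)
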